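/- arXiv:math/0401072 — 4 statements merged into one kernel-verified Lean document; each statement's English description precedes it below -/
import Mathlib

section
/- For the nearest-neighbour simple random walk on Z^n, the probability of returning to the origin after 2i steps is at most a_i / (2n)^i, where a_i = 2^{2i} i^{2i} e depends only on i. More precisely, the number of 2i-step walks from 0 to 0 is at most n^i i^{2i} 2^{2i} sum_{l=1}^{i} 1/l!. -/
/-!
A closed walk on `ℤ^n` of length `2i` cannot use a coordinate direction exactly once, since
that coordinate of its endpoint would then be `±1`. So it uses some set of `l ≤ i` directions,
and each of its `2i` steps is one of the `2l ≤ 2i` unit vectors along them. Summing over the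
`C(n, l) ≤ n^l / l!` choices of that set gives the count, and `∑ 1/l! ≤ e` gives the
probability bound.
-/

/-- The step of the nearest-neighbour random walk on `ℤ^n` indexed by a coordinate
direction and a sign: `±e_j`. -/
def zStep (n : ℕ) (s : Fin n × Bool) : Fin n → ℤ :=
  fun k => if k = s.1 then (if s.2 then 1 else -1) else 0

open Finset

section Walks

variable {ι α β : Type*} [Fintype ι]

def usedDirections [DecidableEq α] (w : ι → α × β) : Finset α :=
  univ.image fun t => (w t).1

lemma zStep_apply_ne_zero_iff {n : ℕ} (s : Fin n × Bool) (k : Fin n) :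
    zStep n s k ≠ 0 ↔ k = s.1 := by
  unfold zStep
  split_ifs <;> simp_all

lemma sum_zStep_apply {n : ℕ} (w : ι → Fin n × Bool) (j : Fin n) :
    (∑ t, zStep n (w t)) j = ∑ t with (w t).1 = j, zStep n (w t) j := by
  rw [Finset.sum_apply, sum_filter_of_ne]
  exact fun t _ h => ((zStep_apply_ne_zero_iff _ _).1 h).symm

lemma two_le_card_filter_fst_eq_of_sum_zStep_eq_zero {n : ℕ} {w : ι → Fin n × Bool}
    (hw : ∑ t, zStep n (w t) = 0) {j : Fin n} (hj : j ∈ usedDirections w) :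
    2 ≤ #{t | (w t).1 = j} := by
  obtain ⟨t₀, -, rfl⟩ := mem_image.1 hj
  by_contra! hlt
  have hmem : t₀ ∈ ({t | (w t).1 = (w t₀).1} : Finset ι) := by simp
  obtain ⟨t₁, hsingle⟩ := card_eq_one.1 <| le_antisymm (by omega) (card_pos.2 ⟨t₀, hmem⟩)
  obtain rfl : t₀ = t₁ := mem_singleton.1 (hsingle ▸ hmem)
  have hzero := congrFun hw (w t₀).1
  rw [sum_zStep_apply, hsingle, sum_singleton] at hzero
  exact (zStep_apply_ne_zero_iff _ _).2 rfl hzero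

lemma two_mul_card_usedDirections_le {n : ℕ} {w : ι → Fin n × Bool}
    (hw : ∑ t, zStep n (w t) = 0) : 2 * #(usedDirections w) ≤ Fintype.card ι :=
  mul_card_image_le_card univ 2 fun _ hj => two_le_card_filter_fst_eq_of_sum_zStep_eq_zero hw hj

lemma card_filter_card_usedDirections_le [Nonempty ι] [DecidableEq ι] [Fintype α]
    [DecidableEq α] [Fintype β] [DecidableEq β] (k : ℕ) :
    #{w : ι → α × β | #(usedDirections w) ≤ k} ≤
      ∑ l ∈ Icc 1 k, (Fintype.card α).choose l * (l * Fintype.card β) ^ Fintype.card ι := by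
  calc _ ≤ #((Icc 1 k).biUnion fun l => (powersetCard l univ).biUnion fun S =>
          Fintype.piFinset fun _ : ι => S ×ˢ (univ : Finset β)) := by
        refine card_le_card fun w hw => ?_
        simp only [mem_biUnion, mem_Icc, mem_powersetCard]
        refine ⟨_, ⟨card_pos.2 (univ_nonempty.image _), (mem_filter.1 hw).2⟩,
          usedDirections w, ⟨subset_univ _, rfl⟩, ?_⟩
        simp [Fintype.mem_piFinset, usedDirections]
    _ ≤ ∑ l ∈ Icc 1 k, ∑ S ∈ powersetCard l (univ : Finset α),
          #(Fintype.piFinset fun _ : ι => S ×ˢ (univ : Finset β)) :=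
        card_biUnion_le.trans (sum_le_sum fun _ _ => card_biUnion_le)
    _ = _ := sum_congr rfl fun l _ => by
        rw [sum_const_nat (m := (l * Fintype.card β) ^ Fintype.card ι) fun S hS => by
          simp [card_product, (mem_powersetCard.1 hS).2], card_powersetCard, card_univ]

end Walks

lemma card_closed_walks_le_sum_choose_mul (n i : ℕ) (hi : 1 ≤ i) :
    Nat.card {w : Fin (2 * i) → Fin n × Bool // ∑ t, zStep n (w t) = 0} ≤
      ∑ l ∈ Icc 1 i, n.choose l * (2 * i) ^ (2 * i) := by
  have : NeZero (2 * i) := ⟨by omega⟩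
  rw [Nat.card_eq_fintype_card, Fintype.card_subtype]
  calc _ ≤ #{w : Fin (2 * i) → Fin n × Bool | #(usedDirections w) ≤ i} :=
        card_le_card <| monotone_filter_right _ fun w _ hw => by
          have := two_mul_card_usedDirections_le hw
          rw [Fintype.card_fin] at this
          omega
    _ ≤ _ := (card_filter_card_usedDirections_le i).trans <| sum_le_sum fun l hl => by
        simp only [Fintype.card_fin, Fintype.card_bool]
        exact Nat.mul_le_mul_left _ (Nat.pow_le_pow_left (by linarith [(mem_Icc.1 hl).2]) _)

lemma choose_le_pow_div_factorial {n l i : ℕ} (hl : 1 ≤ l) (hli : l ≤ i) :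
    (n.choose l : ℝ) ≤ (n : ℝ) ^ i / l.factorial := by
  rcases Nat.eq_zero_or_pos n with rfl | hn
  · simp only [Nat.choose_eq_zero_of_lt hl, Nat.cast_zero]
    positivity
  · calc (n.choose l : ℝ) ≤ (n : ℝ) ^ l / l.factorial := Nat.choose_le_pow_div l n
      _ ≤ (n : ℝ) ^ i / l.factorial := by
        gcongr
        exact_mod_cast hn

lemma sum_Icc_inv_factorial_le_exp_one (i : ℕ) :
    ∑ l ∈ Icc 1 i, ((l.factorial : ℝ))⁻¹ ≤ Real.exp 1 :=
  calc ∑ l ∈ Icc 1 i, ((l.factorial : ℝ))⁻¹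
      ≤ ∑ l ∈ range (i + 1), (1 : ℝ) ^ l / l.factorial := by
        simp only [one_pow, one_div]
        exact sum_le_sum_of_subset_of_nonneg (fun l hl => by simp at hl ⊢; omega)
          fun _ _ _ => by positivity
    _ ≤ Real.exp 1 := Real.sum_le_exp_of_nonneg zero_le_one _

lemma card_closed_walks_le (n i : ℕ) (hi : 1 ≤ i) :
    (Nat.card {w : Fin (2 * i) → Fin n × Bool // ∑ t, zStep n (w t) = 0} : ℝ) ≤
      (n : ℝ) ^ i * (i : ℝ) ^ (2 * i) * 2 ^ (2 * i) *
        ∑ l ∈ Icc 1 i, ((l.factorial : ℝ))⁻¹ :=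
  calc _ ≤ ∑ l ∈ Icc 1 i, (n.choose l : ℝ) * (2 * i : ℝ) ^ (2 * i) := by
        exact_mod_cast card_closed_walks_le_sum_choose_mul n i hi
    _ ≤ ∑ l ∈ Icc 1 i, (n : ℝ) ^ i / l.factorial * (2 * i : ℝ) ^ (2 * i) :=
        sum_le_sum fun l hl => by
          gcongr
          exact choose_le_pow_div_factorial (mem_Icc.1 hl).1 (mem_Icc.1 hl).2
    _ = _ := by simp only [div_eq_mul_inv, ← sum_mul, ← mul_sum, mul_pow]; ring

theorem return_probability_Zn_general (n i : ℕ) (hi : 1 ≤ i) :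
    ((Nat.card {w : Fin (2 * i) → Fin n × Bool // ∑ t, zStep n (w t) = 0} : ℝ) ≤
      (n : ℝ) ^ i * (i : ℝ) ^ (2 * i) * 2 ^ (2 * i) *
        ∑ l ∈ Finset.Icc 1 i, ((l.factorial : ℝ))⁻¹) ∧
    (Nat.card {w : Fin (2 * i) → Fin n × Bool // ∑ t, zStep n (w t) = 0} : ℝ) /
        (2 * (n : ℝ)) ^ (2 * i) ≤
      (2 : ℝ) ^ (2 * i) * (i : ℝ) ^ (2 * i) * Real.exp 1 / (2 * (n : ℝ)) ^ i := by
  refine ⟨card_closed_walks_le n i hi, ?_⟩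
  have hnx : (n : ℝ) ^ i ≤ (2 * n) ^ i :=
    pow_le_pow_left₀ n.cast_nonneg (le_mul_of_one_le_left n.cast_nonneg one_le_two) i
  set x := (2 * (n : ℝ)) ^ i
  set S := ∑ l ∈ Icc 1 i, ((l.factorial : ℝ))⁻¹
  have hcount : (Nat.card {w : Fin (2 * i) → Fin n × Bool // ∑ t, zStep n (w t) = 0} : ℝ) ≤
      x * (2 ^ (2 * i) * (i : ℝ) ^ (2 * i) * Real.exp 1) :=
    calc _ ≤ (n : ℝ) ^ i * (i : ℝ) ^ (2 * i) * 2 ^ (2 * i) * S := card_closed_walks_le n i hi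
      _ = (n : ℝ) ^ i * (2 ^ (2 * i) * (i : ℝ) ^ (2 * i) * S) := by ring
      _ ≤ _ := by gcongr; exact sum_Icc_inv_factorial_le_exp_one i
  calc _ = _ / (x * x) := by rw [two_mul i, pow_add]
    _ ≤ x * (2 ^ (2 * i) * (i : ℝ) ^ (2 * i) * Real.exp 1) / (x * x) :=
        div_le_div_of_nonneg_right hcount (by positivity)
    _ = _ := by rw [mul_comm x, mul_div_assoc, div_self_mul_self', div_eq_mul_inv]

/-- The number of `2i`-step nearest-neighbour walks on `ℤ^n` from `0` to `0` is at most
`n^i i^{2i} 2^{2i} ∑_{l=1}^{i} 1/l!`, and consequently the probability that the simple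
random walk on `ℤ^n` returns to the origin after `2i` steps is at most
`a_i / (2n)^i` with `a_i = 2^{2i} i^{2i} e`. -/
theorem return_probability_Zn (n i : ℕ) (hn : 1 ≤ n) (hi : 1 ≤ i) :
    ((Nat.card {w : Fin (2 * i) → Fin n × Bool // ∑ t, zStep n (w t) = 0} : ℝ) ≤
      (n : ℝ) ^ i * (i : ℝ) ^ (2 * i) * 2 ^ (2 * i) *
        ∑ l ∈ Finset.Icc 1 i, ((l.factorial : ℝ))⁻¹) ∧
    (Nat.card {w : Fin (2 * i) → Fin n × Bool // ∑ t, zStep n (w t) = 0} : ℝ) /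
        (2 * (n : ℝ)) ^ (2 * i) ≤
      (2 : ℝ) ^ (2 * i) * (i : ℝ) ^ (2 * i) * Real.exp 1 / (2 * (n : ℝ)) ^ i :=
  return_probability_Zn_general n i hi
end

section
/- Fix ε ∈ (0, 1/2) and an integer j ≥ 1. Then the sum 2^{-n} Σ_{k ∈ {0,π}^n, k ≠ 0} (n / (2 m(k)))^{j}, where m(k) is the number of components of k equal to π, is bounded uniformly in n ≥ 1 by a constant depending only on j and ε. -/
/-!
Grouping the vectors `k` by `m = m(k)`, the sum is `2⁻ⁿ ∑ₘ C(n,m) (n / 2m)^j`. Split at `m = n/4`: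
when `4m > n` the summand is at most `2^j`, which contributes at most `2^j` in total; when
`4m ≤ n` it is at most `n^j`, while `2⁻ⁿ ∑_{4m ≤ n} C(n,m)` decays geometrically by the
exponential-moment (Chernoff) bound, so that part is `O(n^j qⁿ)` with `q < 1`, which is bounded.
-/

open Finset

theorem Finset.sum_fun_bool_apply_card {α M : Type*} [Fintype α] [DecidableEq α]
    [AddCommMonoid M] (g : ℕ → M) :
    ∑ k : α → Bool, g #{i | k i = true} =
      ∑ m ∈ range (Fintype.card α + 1), (Fintype.card α).choose m • g m := by
  rw [← card_univ, ← sum_powerset_apply_card, powerset_univ]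
  exact sum_nbij' (fun k => ({i | k i = true} : Finset α)) (fun s i => decide (i ∈ s))
    (by simp) (by simp) (fun k _ => by ext; simp) (fun s _ => by ext; simp) (fun _ _ => rfl)

/-- Chernoff: on `k * m ≤ n` the weight `aⁿ (a^k)⁻ᵐ` is at least `1`. -/
theorem sum_choose_filter_mul_le_le_pow {a : ℝ} (ha : 1 ≤ a) (k n : ℕ) :
    ∑ m ∈ range (n + 1) with k * m ≤ n, (n.choose m : ℝ) ≤ (a * (1 + (a ^ k)⁻¹)) ^ n := by
  calc ∑ m ∈ range (n + 1) with k * m ≤ n, (n.choose m : ℝ)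
      ≤ ∑ m ∈ range (n + 1) with k * m ≤ n, (n.choose m : ℝ) * (a ^ n * ((a ^ k)⁻¹) ^ m) := by
        refine sum_le_sum fun m hm => le_mul_of_one_le_right (by positivity) ?_
        rw [inv_pow, ← pow_mul, ← div_eq_mul_inv, one_le_div (by positivity)]
        exact pow_le_pow_right₀ ha (mem_filter.1 hm).2
    _ ≤ ∑ m ∈ range (n + 1), (n.choose m : ℝ) * (a ^ n * ((a ^ k)⁻¹) ^ m) :=
        sum_le_sum_of_subset_of_nonneg (filter_subset _ _) fun _ _ _ => by positivity
    _ = (a * (1 + (a ^ k)⁻¹)) ^ n := by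
        rw [mul_pow, add_comm 1, add_pow, mul_sum]
        exact sum_congr rfl fun m _ => by ring
theorem div_two_mul_pow_le (n m j : ℕ) :
    ((n : ℝ) / (2 * m)) ^ j ≤ 2 ^ j + if 4 * m ≤ n then (n : ℝ) ^ j else 0 := by
  split_ifs with h
  · refine le_add_of_nonneg_of_le (by positivity) (pow_le_pow_left₀ (by positivity) ?_ _)
    rcases m.eq_zero_or_pos with rfl | hm
    · simp
    · exact div_le_self (by positivity) (by norm_cast; omega)
  · rw [add_zero]
    refine pow_le_pow_left₀ (by positivity) ?_ _
    have hnm : (n : ℝ) < 4 * m := by exact_mod_cast not_le.1 h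
    rw [div_le_iff₀ (by linarith [(n.cast_nonneg : (0 : ℝ) ≤ n)])]
    linarith

/-- `881/1000 = (5/4) (1 + (4/5)⁴) / 2`, the Chernoff bound with `a = 5/4`, `k = 4`, halved. -/
theorem sum_choose_mul_div_two_mul_pow_le (n j : ℕ) :
    ∑ m ∈ range (n + 1), (n.choose m : ℝ) * ((n : ℝ) / (2 * m)) ^ j ≤
      2 ^ n * (2 ^ j + (n : ℝ) ^ j * (881 / 1000) ^ n) := by
  calc ∑ m ∈ range (n + 1), (n.choose m : ℝ) * ((n : ℝ) / (2 * m)) ^ j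
      ≤ ∑ m ∈ range (n + 1), (n.choose m : ℝ) * (2 ^ j + if 4 * m ≤ n then (n : ℝ) ^ j else 0) :=
        sum_le_sum fun m _ => mul_le_mul_of_nonneg_left (div_two_mul_pow_le n m j) (by positivity)
    _ = 2 ^ j * ∑ m ∈ range (n + 1), (n.choose m : ℝ) +
          (n : ℝ) ^ j * ∑ m ∈ range (n + 1) with 4 * m ≤ n, (n.choose m : ℝ) := by
        simp only [mul_add, sum_add_distrib, mul_ite, mul_zero, sum_ite, sum_const_zero, add_zero,
          mul_sum]
        congr 1 <;> exact sum_congr rfl fun _ _ => mul_comm _ _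
    _ ≤ 2 ^ j * 2 ^ n + (n : ℝ) ^ j * (5 / 4 * (1 + ((5 / 4) ^ 4)⁻¹)) ^ n := by
        rw [← Nat.cast_sum, Nat.sum_range_choose, Nat.cast_pow, Nat.cast_ofNat]
        gcongr
        exact sum_choose_filter_mul_le_le_pow (by norm_num) 4 n
    _ = 2 ^ n * (2 ^ j + (n : ℝ) ^ j * (881 / 1000) ^ n) := by
        rw [show (5 / 4 * (1 + ((5 / 4) ^ 4)⁻¹) : ℝ) = 2 * (881 / 1000) by norm_num, mul_pow]
        ring

theorem sum_inverse_Dhat_bounded_general (j : ℕ) :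
    ∃ C : ℝ, ∀ n : ℕ, 1 ≤ n →
      ((2 : ℝ) ^ n)⁻¹ *
        ∑ k ∈ Finset.univ.filter (fun k : Fin n → Bool => k ≠ fun _ => false),
          ((n : ℝ) /
            (2 * ((Finset.univ.filter (fun j' => k j' = true)).card : ℝ))) ^ j ≤ C := by
  obtain ⟨C, hC⟩ := (tendsto_pow_const_mul_const_pow_of_lt_one j
    (r := 881 / 1000) (by norm_num) (by norm_num)).bddAbove_range
  refine ⟨2 ^ j + C, fun n _ => ?_⟩
  have hsum : ∑ k ∈ univ.filter (fun k : Fin n → Bool => k ≠ fun _ => false),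
      ((n : ℝ) / (2 * (#{i | k i = true} : ℝ))) ^ j ≤
        2 ^ n * (2 ^ j + (n : ℝ) ^ j * (881 / 1000) ^ n) := by
    refine (sum_le_sum_of_subset_of_nonneg (subset_univ _) fun k _ _ => by positivity).trans ?_
    rw [sum_fun_bool_apply_card fun m => ((n : ℝ) / (2 * m)) ^ j, Fintype.card_fin]
    simpa only [nsmul_eq_mul] using sum_choose_mul_div_two_mul_pow_le n j
  calc _ ≤ ((2 : ℝ) ^ n)⁻¹ * (2 ^ n * (2 ^ j + (n : ℝ) ^ j * (881 / 1000) ^ n)) := by gcongr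
    _ = 2 ^ j + (n : ℝ) ^ j * (881 / 1000) ^ n := inv_mul_cancel_left₀ (by positivity) _
    _ ≤ 2 ^ j + C := by gcongr; exact hC ⟨n, rfl⟩

/-- Fix `ε ∈ (0,1/2)` and an integer `j ≥ 1`.  The sum
`2^{-n} ∑_{k ∈ {0,π}^n, k ≠ 0} (n / (2 m(k)))^j`, where `k` is encoded as a function
`Fin n → Bool` (with `true = π`) and `m(k)` is the number of components equal to `π`,
is bounded uniformly in `n ≥ 1` by a constant depending only on `j` and `ε`. -/
theorem sum_inverse_Dhat_bounded (ε : ℝ) (hε0 : 0 < ε) (hε : ε < 1 / 2)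
    (j : ℕ) (hj : 1 ≤ j) :
    ∃ C : ℝ, ∀ n : ℕ, 1 ≤ n →
      ((2 : ℝ) ^ n)⁻¹ *
        ∑ k ∈ Finset.univ.filter (fun k : Fin n → Bool => k ≠ fun _ => false),
          ((n : ℝ) /
            (2 * ((Finset.univ.filter (fun j' => k j' = true)).card : ℝ))) ^ j ≤ C :=
  sum_inverse_Dhat_bounded_general j
end

section
/- In bond percolation on a transitive graph of degree Ω, for every i ≥ 1 the restricted two-point function τ_p^{(i)}(x) = P_p(0 is connected to x by an occupied path of length at least i) satisfies τ_p^{(i)}(x) ≤ (pΩ)^i (D^{*i} * τ_p)(x), where D^{*i} is the i-fold convolution of the single-step distribution D. -/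
open MeasureTheory ProbabilityTheory ENNReal

/-- `e` is an edge of the transitive (Cayley) graph on the additive group `V`
with neighbour set `S`. -/
def IsEdge {V : Type*} [AddCommGroup V] (S : Finset V) (e : Sym2 V) : Prop :=
  ∃ x y : V, e = s(x, y) ∧ y - x ∈ S

/-- The event that `x` is connected to `y` by an occupied self-avoiding path of
length at least `i`. -/
def ConnGE {V : Type*} [AddCommGroup V] {Ωs : Type*} (S : Finset V)
    (occ : Sym2 V → Set Ωs) (i : ℕ) (x y : V) : Set Ωs :=
  {ω | ∃ k, i ≤ k ∧ ∃ w : Fin (k + 1) → V, Function.Injective w ∧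
    w 0 = x ∧ w (Fin.last k) = y ∧
    ∀ m : Fin k, w m.succ - w m.castSucc ∈ S ∧ ω ∈ occ s(w m.castSucc, w m.succ)}

/-- The event that `x` is connected to `y` by an occupied path. -/
def Conn {V : Type*} [AddCommGroup V] {Ωs : Type*} (S : Finset V)
    (occ : Sym2 V → Set Ωs) : V → V → Set Ωs :=
  ConnGE S occ 0


/-!
Peel off the last step of the path. If `0` is joined to `x` by an occupied self-avoiding path
of length at least `i + 1` whose last step is `s ∈ S`, then the edge `{x - s, x}` is occupied and
`0` is joined to `x - s` by an occupied self-avoiding path of length at least `i` avoiding that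
edge. The second event depends only on the other edges, so by independence the last step costs
exactly a factor `p`. Iterating, with the set of forbidden edges growing by one edge per step,
gives `p ^ i` times the sum over the last `i` steps of the probability of a connection to the
remaining endpoint. Since `S` is finite there are only finitely many paths of a given length from
a given vertex, which makes these path events measurable for the σ-algebra of the edges they use.
-/

section Walks

variable {V : Type*} [AddCommGroup V]

theorem walk_ext {k : ℕ} {w w' : Fin (k + 1) → V} (h0 : w 0 = w' 0)
    (hstep : ∀ m : Fin k, w m.succ - w m.castSucc = w' m.succ - w' m.castSucc) : w = w' := by
  funext m
  induction m using Fin.induction with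
  | zero => exact h0
  | succ m ih => rw [← sub_add_cancel (w m.succ) (w m.castSucc), hstep m, ih, sub_add_cancel]

theorem finite_setOf_walks (S : Finset V) (k : ℕ) (x : V) :
    {w : Fin (k + 1) → V | w 0 = x ∧ ∀ m : Fin k, w m.succ - w m.castSucc ∈ S}.Finite := by
  refine Set.Finite.of_injOn (f := fun w m => w m.succ - w m.castSucc)
    (t := Set.univ.pi fun _ => (S : Set V)) (fun w hw m _ => hw.2 m) ?_
    (Set.Finite.pi fun _ => S.finite_toSet)
  intro w hw w' hw' h
  exact walk_ext (hw.1.trans hw'.1.symm) (congrFun h)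

end Walks

theorem Function.Injective.sym2_step {α : Type*} {k : ℕ} {w : Fin (k + 1) → α}
    (hw : Function.Injective w) :
    Function.Injective fun m : Fin k => s(w m.castSucc, w m.succ) := by
  intro a b hab
  rcases Sym2.eq_iff.1 hab with ⟨h, -⟩ | ⟨h₁, h₂⟩
  · exact Fin.castSucc_injective k (hw h)
  · have h₁ := congrArg Fin.val (hw h₁)
    have h₂ := congrArg Fin.val (hw h₂)
    simp only [Fin.val_castSucc, Fin.val_succ] at h₁ h₂
    omega

theorem sum_pi_fin_succ_sub_sum {V M : Type*} [AddCommGroup V] [AddCommMonoid M]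
    (S : Finset V) (F : V → M) (y : V) (i : ℕ) :
    ∑ f : Fin (i + 1) → S, F (y - ∑ m, (f m : V)) =
      ∑ s : S, ∑ f : Fin i → S, F (y - s - ∑ m, (f m : V)) := by
  rw [← (Fin.consEquiv fun _ => S).sum_comp, Fintype.sum_prod_type]
  simp [Fin.consEquiv, Fin.sum_univ_succ, sub_sub]

section Percolation

variable {V Ωs : Type*} [AddCommGroup V]

def ConnGEOff (S : Finset V) (occ : Sym2 V → Set Ωs) (E : Set (Sym2 V)) (i : ℕ) (x y : V) :
    Set Ωs :=
  {ω | ∃ k, i ≤ k ∧ ∃ w : Fin (k + 1) → V, Function.Injective w ∧ w 0 = x ∧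
    w (Fin.last k) = y ∧ ∀ m : Fin k, w m.succ - w m.castSucc ∈ S ∧
      s(w m.castSucc, w m.succ) ∉ E ∧ ω ∈ occ s(w m.castSucc, w m.succ)}

variable {S : Finset V} {occ : Sym2 V → Set Ωs}

@[simp]
theorem connGEOff_empty (i : ℕ) (x y : V) : ConnGEOff S occ ∅ i x y = ConnGE S occ i x y := by
  simp [ConnGEOff, ConnGE]

theorem connGEOff_subset_conn (E : Set (Sym2 V)) (i : ℕ) (x y : V) :
    ConnGEOff S occ E i x y ⊆ Conn S occ x y := by
  rintro ω ⟨k, -, w, hw, h0, hl, hstep⟩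
  exact ⟨k, k.zero_le, w, hw, h0, hl, fun m => ⟨(hstep m).1, (hstep m).2.2⟩⟩

theorem connGEOff_succ_subset (E : Set (Sym2 V)) (i : ℕ) (x y : V) :
    ConnGEOff S occ E (i + 1) x y ⊆
      ⋃ s : S, ConnGEOff S occ (insert s(y - s, y) E) i x (y - s) ∩ occ s(y - s, y) := by
  rintro ω ⟨_ | k, hik, w, hw, h0, hl, hstep⟩
  · omega
  obtain ⟨hS, hE, hocc⟩ := hstep (Fin.last k)
  rw [Fin.succ_last, hl] at hS hE hocc
  refine Set.mem_iUnion.2 ⟨⟨_, hS⟩, ?_, by simpa only [_root_.sub_sub_cancel] using hocc⟩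
  refine ⟨k, by omega, Fin.init w, hw.comp (Fin.castSucc_injective _), h0,
    (_root_.sub_sub_cancel _ _).symm,
    fun m => ⟨(hstep m.castSucc).1, ?_, (hstep m.castSucc).2.2⟩⟩
  rw [_root_.sub_sub_cancel, ← hl, ← Fin.succ_last, Set.mem_insert_iff, not_or]
  exact ⟨fun h => (Fin.castSucc_lt_last m).ne (hw.sym2_step h), (hstep m.castSucc).2.1⟩

abbrev edgeSigmaAlgebra (S : Finset V) (occ : Sym2 V → Set Ωs) (F : Set (Sym2 V)) :
    MeasurableSpace Ωs :=
  MeasurableSpace.generateFrom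
    {t | ∃ e ∈ {e : {e : Sym2 V // IsEdge S e} | (e : Sym2 V) ∈ F}, occ e = t}

theorem measurableSet_occ_edgeSigmaAlgebra {F : Set (Sym2 V)} {e : Sym2 V} (he : IsEdge S e)
    (heF : e ∈ F) : MeasurableSet[edgeSigmaAlgebra S occ F] (occ e) :=
  MeasurableSpace.measurableSet_generateFrom ⟨⟨e, he⟩, heF, rfl⟩

theorem connGEOff_eq_biUnion (E : Set (Sym2 V)) (i : ℕ) (x y : V) :
    ConnGEOff S occ E i x y =
      ⋃ k, ⋃ w ∈ {w : Fin (k + 1) → V | i ≤ k ∧ Function.Injective w ∧ w 0 = x ∧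
        w (Fin.last k) = y ∧ ∀ m : Fin k, w m.succ - w m.castSucc ∈ S ∧
          s(w m.castSucc, w m.succ) ∉ E}, ⋂ m : Fin k, occ s(w m.castSucc, w m.succ) := by
  ext ω
  simp only [ConnGEOff, Set.mem_ofPred_eq, Set.mem_iUnion, Set.mem_iInter, exists_prop]
  constructor
  · rintro ⟨k, hik, w, hw, h0, hl, hstep⟩
    exact ⟨k, w, ⟨hik, hw, h0, hl, fun m => ⟨(hstep m).1, (hstep m).2.1⟩⟩,
      fun m => (hstep m).2.2⟩
  · rintro ⟨k, w, ⟨hik, hw, h0, hl, hstep⟩, hocc⟩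
    exact ⟨k, hik, w, hw, h0, hl, fun m => ⟨(hstep m).1, (hstep m).2, hocc m⟩⟩

theorem measurableSet_connGEOff (E : Set (Sym2 V)) (i : ℕ) (x y : V) :
    MeasurableSet[edgeSigmaAlgebra S occ Eᶜ] (ConnGEOff S occ E i x y) := by
  rw [connGEOff_eq_biUnion]
  refine MeasurableSet.iUnion fun k => MeasurableSet.biUnion ?_ fun w hw => ?_
  · refine ((finite_setOf_walks S k x).subset ?_).countable
    rintro w ⟨-, -, h0, -, hstep⟩
    exact ⟨h0, fun m => (hstep m).1⟩
  · obtain ⟨-, -, -, -, hstep⟩ := hw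
    exact MeasurableSet.iInter fun m =>
      measurableSet_occ_edgeSigmaAlgebra ⟨_, _, rfl, (hstep m).1⟩ (hstep m).2

variable [MeasurableSpace Ωs] {P : Measure Ωs}

theorem indep_edgeSigmaAlgebra (hmeas : ∀ e, MeasurableSet (occ e))
    (hind : iIndepSet (fun e : {e : Sym2 V // IsEdge S e} => occ (e : Sym2 V)) P)
    {F G : Set (Sym2 V)} (hFG : Disjoint F G) :
    Indep (edgeSigmaAlgebra S occ F) (edgeSigmaAlgebra S occ G) P :=
  hind.indep_generateFrom_of_disjoint (s := fun e : {e // IsEdge S e} => occ e)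
    (fun e => hmeas e) _ _
    (Set.disjoint_left.2 fun _ hF hG => Set.disjoint_left.1 hFG hF hG)

theorem measure_connGEOff_inter_occ (hmeas : ∀ e, MeasurableSet (occ e)) {p : ℝ≥0∞}
    (hoccP : ∀ e, IsEdge S e → P (occ e) = p)
    (hind : iIndepSet (fun e : {e : Sym2 V // IsEdge S e} => occ (e : Sym2 V)) P)
    {e : Sym2 V} (he : IsEdge S e) (E : Set (Sym2 V)) (i : ℕ) (x y : V) :
    P (ConnGEOff S occ (insert e E) i x y ∩ occ e) =
      p * P (ConnGEOff S occ (insert e E) i x y) := by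
  have hindep := indep_edgeSigmaAlgebra hmeas hind
    (Set.disjoint_compl_left_iff_subset.2 (Set.singleton_subset_iff.2 (Set.mem_insert e E)))
  rw [(Indep_iff _ _ _).1 hindep _ _ (measurableSet_connGEOff _ i x y)
    (measurableSet_occ_edgeSigmaAlgebra he rfl), hoccP e he, mul_comm]

theorem measure_connGEOff_le (hmeas : ∀ e, MeasurableSet (occ e)) {p : ℝ≥0∞}
    (hoccP : ∀ e, IsEdge S e → P (occ e) = p)
    (hind : iIndepSet (fun e : {e : Sym2 V // IsEdge S e} => occ (e : Sym2 V)) P)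
    (i : ℕ) (E : Set (Sym2 V)) (x y : V) :
    P (ConnGEOff S occ E i x y) ≤
      p ^ i * ∑ f : Fin i → S, P (Conn S occ x (y - ∑ m, (f m : V))) := by
  induction i generalizing E y with
  | zero => simpa using measure_mono (connGEOff_subset_conn E 0 x y)
  | succ i ih =>
    calc P (ConnGEOff S occ E (i + 1) x y)
        ≤ ∑ s : S, P (ConnGEOff S occ (insert s(y - s, y) E) i x (y - s) ∩ occ s(y - s, y)) :=
          (measure_mono (connGEOff_succ_subset E i x y)).trans (measure_iUnion_fintype_le _ _)
      _ = ∑ s : S, p * P (ConnGEOff S occ (insert s(y - s, y) E) i x (y - s)) := by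
          refine Finset.sum_congr rfl fun s _ => ?_
          exact measure_connGEOff_inter_occ hmeas hoccP hind
            ⟨y - s, y, rfl, by rw [_root_.sub_sub_cancel]; exact s.2⟩ E i x (y - s)
      _ ≤ ∑ s : S, p * (p ^ i * ∑ f : Fin i → S,
            P (Conn S occ x (y - s - ∑ m, (f m : V)))) := by
          gcongr with s; exact ih _ _
      _ = p ^ (i + 1) * ∑ f : Fin (i + 1) → S, P (Conn S occ x (y - ∑ m, (f m : V))) := by
          rw [sum_pi_fin_succ_sub_sum S (fun v => P (Conn S occ x v)), Finset.mul_sum]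
          simp only [pow_succ', mul_assoc]

end Percolation

theorem two_point_ge_le_step_conv_general {V Ωs : Type*} [AddCommGroup V] [MeasurableSpace Ωs]
    (S : Finset V)
    (P : Measure Ωs)
    (occ : Sym2 V → Set Ωs) (hmeas : ∀ e, MeasurableSet (occ e))
    (p : ℝ≥0∞) (hoccP : ∀ e, IsEdge S e → P (occ e) = p)
    (hind : iIndepSet (fun e : {e : Sym2 V // IsEdge S e} => occ (e : Sym2 V)) P)
    (i : ℕ) (x : V) :
    P (ConnGE S occ i 0 x) ≤
      (p * S.card) ^ i * (((S.card : ℝ≥0∞) ^ i)⁻¹ *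
        ∑ f : Fin i → ↥S, P (Conn S occ 0 (x - ∑ m, (f m : V)))) := by
  -- `(S.card ^ i)⁻¹ = ∞` when `S = ∅` and `i ≠ 0`; the sum over `Fin i → S` is then empty.
  have hempty : (S.card : ℝ≥0∞) ^ i = 0 →
      ∑ f : Fin i → ↥S, P (Conn S occ 0 (x - ∑ m, (f m : V))) = 0 := by
    intro h
    obtain ⟨hS, hi⟩ := pow_eq_zero_iff'.1 h
    rw [Nat.cast_eq_zero, Finset.card_eq_zero] at hS
    subst hS
    have : Nonempty (Fin i) := ⟨⟨0, Nat.pos_of_ne_zero hi⟩⟩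
    simp
  rw [mul_pow, mul_assoc, ENNReal.mul_inv_cancel_left' hempty (by simp), ← connGEOff_empty]
  exact measure_connGEOff_le hmeas hoccP hind i ∅ 0 x

/-- In bond percolation on a transitive graph of degree `Ω = S.card`, for every `i ≥ 1`
the restricted two-point function `τ_p^{(i)}(x)` (connection by an occupied path of
length at least `i`) satisfies `τ_p^{(i)}(x) ≤ (pΩ)^i (D^{*i} * τ_p)(x)`, where
`(D^{*i} * τ_p)(x) = Ω^{-i} ∑_{s_1,…,s_i ∈ S} τ_p(x - s_1 - ⋯ - s_i)`. -/
theorem two_point_ge_le_step_conv {V Ωs : Type*} [AddCommGroup V] [MeasurableSpace Ωs]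
    (S : Finset V) (h0S : (0 : V) ∉ S) (hSymm : ∀ v ∈ S, -v ∈ S)
    (P : Measure Ωs) [IsProbabilityMeasure P]
    (occ : Sym2 V → Set Ωs) (hmeas : ∀ e, MeasurableSet (occ e))
    (p : ℝ≥0∞) (hp : p ≤ 1) (hoccP : ∀ e, IsEdge S e → P (occ e) = p)
    (hind : iIndepSet (fun e : {e : Sym2 V // IsEdge S e} => occ (e : Sym2 V)) P)
    (i : ℕ) (hi : 1 ≤ i) (x : V) :
    P (ConnGE S occ i 0 x) ≤
      (p * S.card) ^ i * (((S.card : ℝ≥0∞) ^ i)⁻¹ *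
        ∑ f : Fin i → ↥S, P (Conn S occ 0 (x - ∑ m, (f m : V)))) :=
  two_point_ge_le_step_conv_general S P occ hmeas p hoccP hind i x
end

section
/- Assume Ω p_c ≤ 2 and the diagrammatic bound T_p^{(i,j)} ≤ K_{i,j} Ω^{-i/2}. Then the triangle-type quantity T_p = sup_x (pΩ)(D * τ_p^{*3})(x) satisfies T_p ≤ (2 + 12 K_{2,3}) Ω^{-1}, via the decomposition pΩ(D * τ_p^{*3})(x) ≤ pΩ D(x) + 3 (pΩ)² (D^{*2} * τ_p^{*3})(x). -/
/-!
Conditioning on the last edge of a self-avoiding walk to `u ≠ 0`, which is independent of the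
rest of the walk once that rest avoids `u`, gives `τ ≤ δ + pΩ D ⋆ τ`. Since also `δ ≤ τ`, each
of the three factors of `τ⋆³` can be expanded once in turn, so `τ⋆³ ≤ δ + 3pΩ D ⋆ τ⋆³`.
Convolving with `D` and multiplying by `pΩ` is the decomposition; `pΩ ≤ 2`, `D ≤ Ω⁻¹` and the
diagrammatic bound then bound its right-hand side by `(2 + 12 K₂₃) Ω⁻¹`.
-/

open MeasureTheory ProbabilityTheory ENNReal

/-- Convolution over the vertex group. -/
noncomputable def pconv {V : Type*} [AddCommGroup V] (f g : V → ℝ≥0∞) (x : V) : ℝ≥0∞ :=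
  ∑' y, f y * g (x - y)

/-- The single-step distribution `D(y) = 1/Ω` for `y` a neighbour of `0`. -/
noncomputable def DStep {V : Type*} [AddCommGroup V] [DecidableEq V] (S : Finset V)
    (y : V) : ℝ≥0∞ :=
  if y ∈ S then (S.card : ℝ≥0∞)⁻¹ else 0

section Convolution

variable {V : Type*} [AddCommGroup V]

@[gcongr]
lemma pconv_mono {f f' g g' : V → ℝ≥0∞} (hf : f ≤ f') (hg : g ≤ g') :
    pconv f g ≤ pconv f' g' := fun _ =>
  ENNReal.tsum_le_tsum fun y => mul_le_mul' (hf y) (hg _)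

lemma pconv_add_left (f g h : V → ℝ≥0∞) : pconv (f + g) h = pconv f h + pconv g h := by
  funext x
  simp only [pconv, Pi.add_apply, add_mul]
  exact ENNReal.tsum_add

lemma pconv_add_right (f g h : V → ℝ≥0∞) : pconv f (g + h) = pconv f g + pconv f h := by
  funext x
  simp only [pconv, Pi.add_apply, mul_add]
  exact ENNReal.tsum_add

lemma pconv_smul_left (c : ℝ≥0∞) (f g : V → ℝ≥0∞) : pconv (c • f) g = c • pconv f g := by
  funext x
  simp only [pconv, Pi.smul_apply, smul_eq_mul, mul_assoc]
  exact ENNReal.tsum_mul_left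

lemma pconv_smul_right (c : ℝ≥0∞) (f g : V → ℝ≥0∞) : pconv f (c • g) = c • pconv f g := by
  funext x
  simp only [pconv, Pi.smul_apply, smul_eq_mul, mul_left_comm _ c]
  exact ENNReal.tsum_mul_left

lemma pconv_assoc (f g h : V → ℝ≥0∞) : pconv (pconv f g) h = pconv f (pconv g h) := by
  funext x
  calc ∑' y, (∑' z, f z * g (y - z)) * h (x - y)
      = ∑' z, ∑' y, f z * (g (y - z) * h (x - y)) := by
        simp only [← ENNReal.tsum_mul_right, mul_assoc]
        exact ENNReal.tsum_comm
    _ = ∑' z, f z * ∑' w, g w * h (x - z - w) := by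
        refine tsum_congr fun z => ?_
        rw [← ENNReal.tsum_mul_left, ← (Equiv.addRight z).tsum_eq]
        simp only [Equiv.coe_addRight, add_sub_cancel_right, sub_add_eq_sub_sub_swap]

variable [DecidableEq V]

lemma pconv_single_zero_left (f : V → ℝ≥0∞) : pconv (Pi.single 0 1) f = f := by
  funext x
  rw [pconv, tsum_eq_single 0 fun y hy => by rw [Pi.single_eq_of_ne hy, zero_mul]]
  simp

lemma pconv_single_zero_right (f : V → ℝ≥0∞) : pconv f (Pi.single 0 1) = f := by
  funext x
  rw [pconv, tsum_eq_single x fun y hy => by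
    rw [Pi.single_eq_of_ne (sub_ne_zero.mpr hy.symm), mul_zero]]
  simp

lemma pconv_dStep_apply (S : Finset V) (f : V → ℝ≥0∞) (x : V) :
    pconv (DStep S) f x = (S.card : ℝ≥0∞)⁻¹ * ∑ s ∈ S, f (x - s) := by
  rw [pconv, tsum_eq_sum fun y hy => by rw [DStep, if_neg hy, zero_mul], Finset.mul_sum]
  exact Finset.sum_congr rfl fun y hy => by rw [DStep, if_pos hy]

lemma dStep_le (S : Finset V) (x : V) : DStep S x ≤ (S.card : ℝ≥0∞)⁻¹ := by
  unfold DStep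
  split_ifs
  exacts [le_rfl, zero_le]

variable {τ D : V → ℝ≥0∞} {c : ℝ≥0∞}

lemma pconv_le_of_left_le_single_add (hτ : τ ≤ Pi.single 0 1 + c • pconv D τ) (f : V → ℝ≥0∞) :
    pconv τ f ≤ f + c • pconv D (pconv τ f) :=
  calc pconv τ f ≤ pconv (Pi.single 0 1 + c • pconv D τ) f := pconv_mono hτ le_rfl
    _ = f + c • pconv D (pconv τ f) := by
      rw [pconv_add_left, pconv_single_zero_left, pconv_smul_left, pconv_assoc]

lemma pconv_three_le_single_add (hδ : Pi.single 0 1 ≤ τ)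
    (hτ : τ ≤ Pi.single 0 1 + c • pconv D τ) :
    pconv τ (pconv τ τ) ≤ Pi.single 0 1 + (3 * c) • pconv D (pconv τ (pconv τ τ)) := by
  set A := pconv τ (pconv τ τ)
  have hτ₂ : τ ≤ pconv τ τ := by simpa only [pconv_single_zero_right] using pconv_mono le_rfl hδ
  have hτ₂A : pconv τ τ ≤ A := pconv_mono le_rfl hτ₂
  have hτA : τ ≤ A := hτ₂.trans hτ₂A
  calc A ≤ pconv τ τ + c • pconv D A := pconv_le_of_left_le_single_add hτ _
    _ ≤ τ + c • pconv D A + c • pconv D A := by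
      gcongr; exact (pconv_le_of_left_le_single_add hτ τ).trans (by gcongr)
    _ ≤ Pi.single 0 1 + c • pconv D A + c • pconv D A + c • pconv D A := by
      gcongr; exact hτ.trans (by gcongr)
    _ = Pi.single 0 1 + (3 * c) • pconv D A := by
      funext x
      simp only [Pi.add_apply, Pi.smul_apply, smul_eq_mul]
      ring

lemma pconv_le_of_right_le_single_add {A : V → ℝ≥0∞} {a : ℝ≥0∞}
    (hA : A ≤ Pi.single 0 1 + a • pconv D A) :
    pconv D A ≤ D + a • pconv D (pconv D A) :=
  calc pconv D A ≤ pconv D (Pi.single 0 1 + a • pconv D A) := pconv_mono le_rfl hA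
    _ = D + a • pconv D (pconv D A) := by
      rw [pconv_add_right, pconv_single_zero_right, pconv_smul_right]

end Convolution

section Percolation

variable {V Ωs : Type*} [AddCommGroup V] (S : Finset V) (occ : Sym2 V → Set Ωs)

lemma exists_partialSum_eq_of_steps_mem {k : ℕ} {w : Fin (k + 1) → V} (hw₀ : w 0 = 0)
    (hw : ∀ m : Fin k, w m.succ - w m.castSucc ∈ S) :
    ∃ σ : Fin k → S, Fin.partialSum (Subtype.val ∘ σ) = w := by
  refine ⟨fun m => ⟨-w m.castSucc + w m.succ, neg_add_eq_sub (w _) _ ▸ hw m⟩, ?_⟩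
  have h := Fin.partialSum_left_neg w
  rwa [hw₀, zero_vadd] at h

lemma partialSum_succ_sub_castSucc {k : ℕ} (f : Fin k → V) (m : Fin k) :
    Fin.partialSum f m.succ - Fin.partialSum f m.castSucc = f m := by
  rw [Fin.partialSum_succ, add_sub_cancel_left]

/-- Occupied self-avoiding walks from `0` to `y` missing `u`, enumerated by their steps in `S` so
that the union is countable. -/
def ConnAvoiding (u y : V) : Set Ωs :=
  ⋃ k, ⋃ w ∈ {w ∈ Set.range fun σ : Fin k → S => Fin.partialSum (Subtype.val ∘ σ) |
      Function.Injective w ∧ w (Fin.last k) = y ∧ ∀ m, w m ≠ u},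
    ⋂ m : Fin k, occ s(w m.castSucc, w m.succ)

lemma connAvoiding_subset_conn (u y : V) : ConnAvoiding S occ u y ⊆ Conn S occ 0 y := by
  simp only [ConnAvoiding, Set.iUnion_subset_iff]
  rintro k _ ⟨⟨σ, rfl⟩, hinj, hy, -⟩ ω hω
  exact ⟨k, k.zero_le, _, hinj, Fin.partialSum_zero _, hy, fun m =>
    ⟨by simp [partialSum_succ_sub_castSucc], Set.mem_iInter.mp hω m⟩⟩

lemma conn_subset_iUnion_connAvoiding {u : V} (hu : u ≠ 0) :
    Conn S occ 0 u ⊆ ⋃ s ∈ S, occ s(u - s, u) ∩ ConnAvoiding S occ u (u - s) := by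
  rintro ω ⟨_ | k, -, w, hinj, hw₀, hwu, hstep⟩
  · exact absurd (hw₀.symm.trans hwu) hu.symm
  obtain ⟨hlastS, hlast⟩ := hstep (Fin.last k)
  rw [Fin.succ_last, hwu] at hlastS hlast
  refine Set.mem_iUnion₂.mpr ⟨_, hlastS, by rwa [_root_.sub_sub_cancel], ?_⟩
  obtain ⟨σ, hσ⟩ := exists_partialSum_eq_of_steps_mem S (w := Fin.init w) hw₀
    fun m => by simpa only [Fin.init, Fin.succ_castSucc] using (hstep m.castSucc).1
  simp only [ConnAvoiding, Set.mem_iUnion, Set.mem_iInter]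
  refine ⟨k, Fin.init w,
    ⟨⟨σ, hσ⟩, hinj.comp (Fin.castSucc_injective _), by simp [Fin.init], fun m hm => ?_⟩,
    fun m => by simpa only [Fin.init, Fin.succ_castSucc] using (hstep m.castSucc).2⟩
  exact (Fin.castSucc_lt_last m).ne (hinj (hm.trans hwu.symm))

lemma measurableSet_connAvoiding (u y : V) :
    MeasurableSet[MeasurableSpace.generateFrom
      {t | ∃ e ∈ {e : {e : Sym2 V // IsEdge S e} | u ∉ (e : Sym2 V)}, occ e = t}]
      (ConnAvoiding S occ u y) := by
  refine MeasurableSet.iUnion fun k =>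
    MeasurableSet.biUnion ((Set.countable_range _).mono (Set.sep_subset _ _)) ?_
  rintro _ ⟨⟨σ, rfl⟩, -, -, hu⟩
  refine MeasurableSet.iInter fun m => MeasurableSpace.measurableSet_generateFrom
    ⟨⟨_, _, _, rfl, by simp [partialSum_succ_sub_castSucc]⟩, ?_, rfl⟩
  simp only [Set.mem_ofPred_eq, Sym2.mem_iff, not_or]
  exact ⟨(hu _).symm, (hu _).symm⟩

variable [MeasurableSpace Ωs] {P : Measure Ωs} {p : ℝ≥0∞}
variable {S occ}

/-- The last edge `s(u - s, u)` is independent of the walk before it, which avoids `u`; this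
replaces the paper's use of the BK inequality. -/
lemma measure_conn_le_mul_sum (hmeas : ∀ e, MeasurableSet (occ e))
    (hoccP : ∀ e, IsEdge S e → P (occ e) = p)
    (hind : iIndepSet (fun e : {e : Sym2 V // IsEdge S e} => occ (e : Sym2 V)) P)
    {u : V} (hu : u ≠ 0) :
    P (Conn S occ 0 u) ≤ p * ∑ s ∈ S, P (Conn S occ 0 (u - s)) := by
  have hlast : ∀ s ∈ S, P (occ s(u - s, u) ∩ ConnAvoiding S occ u (u - s)) ≤
      p * P (Conn S occ 0 (u - s)) := by
    intro s hs
    have he : IsEdge S s(u - s, u) := ⟨u - s, u, rfl, by rwa [_root_.sub_sub_cancel]⟩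
    have hindep := hind.indep_generateFrom_of_disjoint (fun e : {e // IsEdge S e} => hmeas e)
      {⟨_, he⟩} {e | u ∉ (e : Sym2 V)} (Set.disjoint_singleton_left.mpr (by simp))
    rw [(Indep_iff _ _ _).1 hindep _ _ (MeasurableSpace.measurableSet_generateFrom ⟨_, rfl, rfl⟩)
      (measurableSet_connAvoiding S occ u _), hoccP _ he]
    gcongr
    exact connAvoiding_subset_conn S occ u _
  calc P (Conn S occ 0 u)
      ≤ P (⋃ s ∈ S, occ s(u - s, u) ∩ ConnAvoiding S occ u (u - s)) :=
        measure_mono (conn_subset_iUnion_connAvoiding S occ hu)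
    _ ≤ ∑ s ∈ S, P (occ s(u - s, u) ∩ ConnAvoiding S occ u (u - s)) :=
        measure_biUnion_finset_le _ _
    _ ≤ ∑ s ∈ S, p * P (Conn S occ 0 (u - s)) := Finset.sum_le_sum hlast
    _ = p * ∑ s ∈ S, P (Conn S occ 0 (u - s)) := (Finset.mul_sum _ _ _).symm

variable [DecidableEq V]

lemma single_le_measure_conn [IsProbabilityMeasure P] :
    Pi.single 0 1 ≤ fun y => P (Conn S occ 0 y) := by
  intro y
  rcases eq_or_ne y 0 with rfl | hy
  · have huniv : Conn S occ 0 0 = Set.univ := Set.eq_univ_of_forall fun _ =>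
      ⟨0, le_rfl, fun _ => 0, fun _ _ _ => Subsingleton.elim (α := Fin 1) _ _, rfl, rfl, Fin.elim0⟩
    simp [huniv]
  · simp [Pi.single_eq_of_ne hy]

lemma measure_conn_le_single_add [IsProbabilityMeasure P] (hmeas : ∀ e, MeasurableSet (occ e))
    (hoccP : ∀ e, IsEdge S e → P (occ e) = p)
    (hind : iIndepSet (fun e : {e : Sym2 V // IsEdge S e} => occ (e : Sym2 V)) P) :
    (fun y => P (Conn S occ 0 y)) ≤
      Pi.single 0 1 + (p * S.card) • pconv (DStep S) fun y => P (Conn S occ 0 y) := by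
  intro u
  rcases eq_or_ne u 0 with rfl | hu
  · simpa using le_add_right prob_le_one
  simp only [Pi.add_apply, Pi.single_eq_of_ne hu, zero_add, Pi.smul_apply, smul_eq_mul,
    pconv_dStep_apply]
  refine (measure_conn_le_mul_sum hmeas hoccP hind hu).trans_eq ?_
  rcases S.eq_empty_or_nonempty with rfl | hS
  · simp
  · rw [mul_assoc, ← mul_assoc (S.card : ℝ≥0∞),
      ENNReal.mul_inv_cancel (by simpa using hS.card_ne_zero) (natCast_ne_top _), one_mul]

end Percolation

theorem triangle_bound_general {V Ωs : Type*} [AddCommGroup V] [DecidableEq V]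
    [MeasurableSpace Ωs]
    (S : Finset V)
    (P : Measure Ωs) [IsProbabilityMeasure P]
    (occ : Sym2 V → Set Ωs) (hmeas : ∀ e, MeasurableSet (occ e))
    (p : ℝ≥0∞) (hoccP : ∀ e, IsEdge S e → P (occ e) = p)
    (hind : iIndepSet (fun e : {e : Sym2 V // IsEdge S e} => occ (e : Sym2 V)) P)
    (T23 K23 : ℝ≥0∞)
    (hpΩ : p * S.card ≤ 2)
    (hT23 : ∀ x : V,
      pconv (DStep S) (pconv (DStep S)
        (pconv (fun y => P (Conn S occ 0 y)) (pconv (fun y => P (Conn S occ 0 y))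
          (fun y => P (Conn S occ 0 y))))) x ≤ T23)
    (hK : T23 ≤ K23 * (S.card : ℝ≥0∞)⁻¹) :
    (∀ x : V,
      p * S.card * pconv (DStep S)
        (pconv (fun y => P (Conn S occ 0 y)) (pconv (fun y => P (Conn S occ 0 y))
          (fun y => P (Conn S occ 0 y)))) x ≤
      p * S.card * DStep S x + 3 * (p * S.card) ^ 2 *
        pconv (DStep S) (pconv (DStep S)
          (pconv (fun y => P (Conn S occ 0 y)) (pconv (fun y => P (Conn S occ 0 y))
            (fun y => P (Conn S occ 0 y))))) x) ∧
    (⨆ x : V, p * S.card * pconv (DStep S)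
        (pconv (fun y => P (Conn S occ 0 y)) (pconv (fun y => P (Conn S occ 0 y))
          (fun y => P (Conn S occ 0 y)))) x) ≤
      (2 + 12 * K23) * (S.card : ℝ≥0∞)⁻¹ := by
  set τ : V → ℝ≥0∞ := fun y => P (Conn S occ 0 y)
  set c := p * S.card
  have hτ₃ := pconv_three_le_single_add single_le_measure_conn
    (measure_conn_le_single_add hmeas hoccP hind)
  have decomposition (x : V) : c * pconv (DStep S) (pconv τ (pconv τ τ)) x ≤
      c * DStep S x + 3 * c ^ 2 * pconv (DStep S) (pconv (DStep S) (pconv τ (pconv τ τ))) x :=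
    calc _ ≤ c * (DStep S x +
            3 * c * pconv (DStep S) (pconv (DStep S) (pconv τ (pconv τ τ))) x) := by
          gcongr; exact pconv_le_of_right_le_single_add hτ₃ x
      _ = _ := by ring
  refine ⟨decomposition, iSup_le fun x => (decomposition x).trans ?_⟩
  calc _ ≤ 2 * (S.card : ℝ≥0∞)⁻¹ + 3 * 2 ^ 2 * (K23 * (S.card : ℝ≥0∞)⁻¹) := by
        gcongr
        · exact dStep_le S x
        · exact (hT23 x).trans hK
    _ = (2 + 12 * K23) * (S.card : ℝ≥0∞)⁻¹ := by ring

/-- Assume `Ωp ≤ 2` and the diagrammatic bound `T_p^{(2,3)} ≤ K_{2,3} Ω⁻¹`, where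
`T_p^{(2,3)}` bounds `(D^{*2} * τ_p^{*3})(x)` pointwise (this uses `τ̂_p ≥ 0`).  Then
`T_p = sup_x (pΩ)(D * τ_p^{*3})(x) ≤ (2 + 12 K_{2,3}) Ω⁻¹`, via the decomposition
`pΩ(D * τ_p^{*3})(x) ≤ pΩ D(x) + 3 (pΩ)² (D^{*2} * τ_p^{*3})(x)`. -/
theorem triangle_bound {V Ωs : Type*} [AddCommGroup V] [DecidableEq V]
    [MeasurableSpace Ωs]
    (S : Finset V) (h0S : (0 : V) ∉ S) (hSymm : ∀ v ∈ S, -v ∈ S)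
    (P : Measure Ωs) [IsProbabilityMeasure P]
    (occ : Sym2 V → Set Ωs) (hmeas : ∀ e, MeasurableSet (occ e))
    (p : ℝ≥0∞) (hp : p ≤ 1) (hoccP : ∀ e, IsEdge S e → P (occ e) = p)
    (hind : iIndepSet (fun e : {e : Sym2 V // IsEdge S e} => occ (e : Sym2 V)) P)
    (T23 K23 : ℝ≥0∞)
    (hpΩ : p * S.card ≤ 2)
    (hT23 : ∀ x : V,
      pconv (DStep S) (pconv (DStep S)
        (pconv (fun y => P (Conn S occ 0 y)) (pconv (fun y => P (Conn S occ 0 y))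
          (fun y => P (Conn S occ 0 y))))) x ≤ T23)
    (hK : T23 ≤ K23 * (S.card : ℝ≥0∞)⁻¹) :
    (∀ x : V,
      p * S.card * pconv (DStep S)
        (pconv (fun y => P (Conn S occ 0 y)) (pconv (fun y => P (Conn S occ 0 y))
          (fun y => P (Conn S occ 0 y)))) x ≤
      p * S.card * DStep S x + 3 * (p * S.card) ^ 2 *
        pconv (DStep S) (pconv (DStep S)
          (pconv (fun y => P (Conn S occ 0 y)) (pconv (fun y => P (Conn S occ 0 y))
            (fun y => P (Conn S occ 0 y))))) x) ∧
    (⨆ x : V, p * S.card * pconv (DStep S)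
        (pconv (fun y => P (Conn S occ 0 y)) (pconv (fun y => P (Conn S occ 0 y))
          (fun y => P (Conn S occ 0 y)))) x) ≤
      (2 + 12 * K23) * (S.card : ℝ≥0∞)⁻¹ :=
  triangle_bound_general S P occ hmeas p hoccP hind T23 K23 hpΩ hT23 hK
end
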